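/- arXiv:2602.06918 — 4 statements merged into one kernel-verified Lean document; each statement's English description precedes it below -/
import Mathlib

section
/- Every 2-copula C satisfies |C(u,v) − C(v,u)| ≤ 1/3 for all (u,v) ∈ [0,1]². -/
/-!
For `u ≤ v`, the Fréchet bounds `max (u + v - 1) 0 ≤ C u v ≤ min u v`, together with monotonicity
and 1-Lipschitz continuity of `C` in each variable (through the diagonal value `C u u`), bound
`C u v - C v u` by each of `u`, `v - u` and `1 - v`. These three numbers sum to `1`, so the
smallest is at most `1/3`. The reverse difference is the same bound for the transposed copula.
-/

open Set

/-- A 2-copula on [0,1]². -/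
def IsCopula2 (C : ℝ → ℝ → ℝ) : Prop :=
  (∀ u ∈ Set.Icc (0:ℝ) 1, ∀ v ∈ Set.Icc (0:ℝ) 1, C u v ∈ Set.Icc (0:ℝ) 1) ∧
  (∀ u ∈ Set.Icc (0:ℝ) 1, C u 0 = 0 ∧ C 0 u = 0 ∧ C u 1 = u ∧ C 1 u = u) ∧
  (∀ u ∈ Set.Icc (0:ℝ) 1, ∀ u' ∈ Set.Icc (0:ℝ) 1, ∀ v ∈ Set.Icc (0:ℝ) 1, ∀ v' ∈ Set.Icc (0:ℝ) 1,
    u ≤ u' → v ≤ v' → 0 ≤ C u' v' - C u' v - C u v' + C u v)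

namespace IsCopula2

variable {C : ℝ → ℝ → ℝ}

theorem swap (hC : IsCopula2 C) : IsCopula2 (fun u v => C v u) := by
  obtain ⟨hrange, hbound, hinc⟩ := hC
  refine ⟨fun u hu v hv => hrange v hv u hu, fun u hu => ?_, ?_⟩
  · obtain ⟨hu0, h0u, hu1, h1u⟩ := hbound u hu
    exact ⟨h0u, hu0, h1u, hu1⟩
  · intro u hu u' hu' v hv v' hv' huu' hvv'
    linarith [hinc v hv v' hv' u hu u' hu' hvv' huu']

variable {u v : ℝ}

theorem nonneg (hC : IsCopula2 C) (hu : u ∈ Icc (0 : ℝ) 1) (hv : v ∈ Icc (0 : ℝ) 1) :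
    0 ≤ C u v :=
  (hC.1 u hu v hv).1

theorem le_left (hC : IsCopula2 C) (hu : u ∈ Icc (0 : ℝ) 1) (hv : v ∈ Icc (0 : ℝ) 1) :
    C u v ≤ u := by
  have := hC.2.2 0 (by simp) u hu v hv 1 (by simp) hu.1 hv.2
  linarith [hC.2.1 u hu, hC.2.1 v hv, hC.2.1 1 (by simp)]

theorem add_sub_one_le (hC : IsCopula2 C) (hu : u ∈ Icc (0 : ℝ) 1) (hv : v ∈ Icc (0 : ℝ) 1) :
    u + v - 1 ≤ C u v := by
  have := hC.2.2 u hu 1 (by simp) v hv 1 (by simp) hu.2 hv.2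
  linarith [hC.2.1 u hu, hC.2.1 v hv, hC.2.1 1 (by simp)]

theorem mono_left (hC : IsCopula2 C) {u' : ℝ} (hu : u ∈ Icc (0 : ℝ) 1)
    (hu' : u' ∈ Icc (0 : ℝ) 1) (hv : v ∈ Icc (0 : ℝ) 1) (huu' : u ≤ u') : C u v ≤ C u' v := by
  have := hC.2.2 u hu u' hu' 0 (by simp) v hv huu' hv.1
  linarith [hC.2.1 u hu, hC.2.1 u' hu']

theorem sub_le_sub_of_le_right (hC : IsCopula2 C) {v' : ℝ} (hu : u ∈ Icc (0 : ℝ) 1)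
    (hv : v ∈ Icc (0 : ℝ) 1) (hv' : v' ∈ Icc (0 : ℝ) 1) (hvv' : v ≤ v') :
    C u v' - C u v ≤ v' - v := by
  have := hC.2.2 u hu 1 (by simp) v hv v' hv' hu.2 hvv'
  linarith [hC.2.1 v hv, hC.2.1 v' hv']

theorem sub_swap_le_third_of_le (hC : IsCopula2 C) (hu : u ∈ Icc (0 : ℝ) 1)
    (hv : v ∈ Icc (0 : ℝ) 1) (huv : u ≤ v) : C u v - C v u ≤ 1 / 3 := by
  have hle_u : C u v - C v u ≤ u := by
    linarith [hC.le_left hu hv, hC.nonneg hv hu]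
  have hle_sub : C u v - C v u ≤ v - u := by
    linarith [hC.sub_le_sub_of_le_right hu hu hv huv, hC.mono_left hu hv hu huv]
  have hle_one_sub : C u v - C v u ≤ 1 - v := by
    linarith [hC.le_left hu hv, hC.add_sub_one_le hv hu]
  linarith

end IsCopula2

/-- Every 2-copula C satisfies |C(u,v) − C(v,u)| ≤ 1/3 on [0,1]². -/
theorem copula_asymmetry_le_third (C : ℝ → ℝ → ℝ) (hC : IsCopula2 C) :
    ∀ u ∈ Icc (0:ℝ) 1, ∀ v ∈ Icc (0:ℝ) 1, |C u v - C v u| ≤ 1/3 := by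
  intro u hu v hv
  wlog huv : u ≤ v generalizing u v
  · rw [abs_sub_comm]
    exact this v hv u hu (le_of_not_ge huv)
  rw [abs_le]
  constructor
  · linarith [hC.swap.sub_swap_le_third_of_le hu hv huv]
  · exact hC.sub_swap_le_third_of_le hu hv huv
end

section
/- The set of 2-copulas with maximal asymmetry measure S₂' = {C : sup_{(u,v)} |C(u,v)−C(v,u)| = 1/3} has empty interior in the space of 2-copulas with the sup metric; in particular, for any C ∈ S₂' and any n, the copula (1−1/n)C + (1/n)Π is not in S₂', where Π(u,v)=uv. -/
open Set

/-- The asymmetry measure ‖d_C‖_∞ = sup |C(u,v) − C(v,u)| over [0,1]². -/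
noncomputable def asym (C : ℝ → ℝ → ℝ) : ℝ :=
  sSup {x | ∃ u ∈ Set.Icc (0:ℝ) 1, ∃ v ∈ Set.Icc (0:ℝ) 1, x = |C u v - C v u|}

/-- The sup distance d_∞ between two functions on [0,1]². -/
noncomputable def dsup (C C' : ℝ → ℝ → ℝ) : ℝ :=
  sSup {x | ∃ u ∈ Set.Icc (0:ℝ) 1, ∃ v ∈ Set.Icc (0:ℝ) 1, x = |C u v - C' u v|}

/-! Mixing a copula with weight `t` of a symmetric copula, here `Π`, multiplies its asymmetry
by at most `1 - t` and moves it by at most `t` in the sup metric. Since every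
maximally asymmetric copula has asymmetry `1/3 > 0`, the mixtures with small positive `t`
approximate it from outside the set of maximally asymmetric copulas. -/

lemma sSup_square_le {f : ℝ → ℝ → ℝ} {b : ℝ}
    (h : ∀ u ∈ Icc (0:ℝ) 1, ∀ v ∈ Icc (0:ℝ) 1, f u v ≤ b) :
    sSup {x | ∃ u ∈ Icc (0:ℝ) 1, ∃ v ∈ Icc (0:ℝ) 1, x = f u v} ≤ b := by
  refine csSup_le ⟨f 0 0, 0, left_mem_Icc.2 zero_le_one, 0, left_mem_Icc.2 zero_le_one, rfl⟩ ?_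
  rintro x ⟨u, hu, v, hv, rfl⟩
  exact h u hu v hv

theorem isCopula2_mul : IsCopula2 fun u v => u * v := by
  refine ⟨fun u hu v hv => ⟨mul_nonneg hu.1 hv.1, mul_le_one₀ hu.2 hv.1 hv.2⟩,
    fun u _ => by simp, ?_⟩
  intro u _ u' _ v _ v' _ huu' hvv'
  linear_combination mul_nonneg (sub_nonneg.2 huu') (sub_nonneg.2 hvv')

namespace IsCopula2

variable {C D : ℝ → ℝ → ℝ} {t : ℝ}

theorem abs_sub_le_one (hC : IsCopula2 C) (hD : IsCopula2 D) {u v u' v' : ℝ}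
    (hu : u ∈ Icc (0:ℝ) 1) (hv : v ∈ Icc (0:ℝ) 1) (hu' : u' ∈ Icc (0:ℝ) 1)
    (hv' : v' ∈ Icc (0:ℝ) 1) : |C u v - D u' v'| ≤ 1 := by
  have hCuv := hC.1 u hu v hv
  have hDuv := hD.1 u' hu' v' hv'
  rw [abs_le]
  constructor <;> linarith [hCuv.1, hCuv.2, hDuv.1, hDuv.2]

theorem abs_sub_swap_le_asym (hC : IsCopula2 C) {u v : ℝ}
    (hu : u ∈ Icc (0:ℝ) 1) (hv : v ∈ Icc (0:ℝ) 1) : |C u v - C v u| ≤ asym C := by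
  refine le_csSup ⟨1, ?_⟩ ⟨u, hu, v, hv, rfl⟩
  rintro x ⟨a, ha, b, hb, rfl⟩
  exact hC.abs_sub_le_one hC ha hb hb ha

theorem convexComb (hC : IsCopula2 C) (hD : IsCopula2 D) (ht₀ : 0 ≤ t) (ht₁ : t ≤ 1) :
    IsCopula2 fun u v => (1 - t) * C u v + t * D u v := by
  obtain ⟨hCrange, hCbdry, hCrect⟩ := hC
  obtain ⟨hDrange, hDbdry, hDrect⟩ := hD
  refine ⟨fun u hu v hv => ?_, fun u hu => ?_, fun u hu u' hu' v hv v' hv' huu' hvv' => ?_⟩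
  · simpa only [smul_eq_mul] using convex_Icc (0:ℝ) 1 (hCrange u hu v hv) (hDrange u hu v hv)
      (sub_nonneg.2 ht₁) ht₀ (by ring)
  · obtain ⟨hC0, hC0', hC1, hC1'⟩ := hCbdry u hu
    obtain ⟨hD0, hD0', hD1, hD1'⟩ := hDbdry u hu
    simp only [hC0, hC0', hC1, hC1', hD0, hD0', hD1, hD1']
    refine ⟨?_, ?_, ?_, ?_⟩ <;> ring
  · linear_combination mul_nonneg (sub_nonneg.2 ht₁) (hCrect u hu u' hu' v hv v' hv' huu' hvv') +
      mul_nonneg ht₀ (hDrect u hu u' hu' v hv v' hv' huu' hvv')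

theorem asym_convexComb_le (hC : IsCopula2 C) (hD : ∀ u v, D u v = D v u) (ht₁ : t ≤ 1) :
    asym (fun u v => (1 - t) * C u v + t * D u v) ≤ (1 - t) * asym C := by
  refine sSup_square_le fun u hu v hv => ?_
  calc |(1 - t) * C u v + t * D u v - ((1 - t) * C v u + t * D v u)|
      = (1 - t) * |C u v - C v u| := by
        rw [hD v u, add_sub_add_right_eq_sub, ← mul_sub, abs_mul,
          abs_of_nonneg (sub_nonneg.2 ht₁)]
    _ ≤ (1 - t) * asym C :=
        mul_le_mul_of_nonneg_left (hC.abs_sub_swap_le_asym hu hv) (sub_nonneg.2 ht₁)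

theorem dsup_convexComb_le (hC : IsCopula2 C) (hD : IsCopula2 D) (ht₀ : 0 ≤ t) :
    dsup C (fun u v => (1 - t) * C u v + t * D u v) ≤ t := by
  refine sSup_square_le fun u hu v hv => ?_
  calc |C u v - ((1 - t) * C u v + t * D u v)| = t * |C u v - D u v| := by
        rw [show C u v - ((1 - t) * C u v + t * D u v) = t * (C u v - D u v) by ring, abs_mul,
          abs_of_nonneg ht₀]
    _ ≤ t * 1 := by gcongr; exact hC.abs_sub_le_one hD hu hv hu hv
    _ = t := mul_one t

theorem asym_convexComb_mul_lt (hC : IsCopula2 C) (hA : 0 < asym C) (ht₀ : 0 < t)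
    (ht₁ : t ≤ 1) : asym (fun u v => (1 - t) * C u v + t * (u * v)) < asym C :=
  calc _ ≤ (1 - t) * asym C := hC.asym_convexComb_le (fun u v => mul_comm u v) ht₁
    _ < asym C := by nlinarith

end IsCopula2

/-- The set S₂' of copulas with maximal asymmetry 1/3 has empty interior in the space
of 2-copulas with the sup metric: every element of S₂' is approximated by copulas
outside S₂'. In particular, for C ∈ S₂' and n ≥ 1, the copula (1−1/n)C + (1/n)Π is
not in S₂', where Π(u,v) = uv. -/
theorem maximalAsymmetry_empty_interior :
    (∀ C : ℝ → ℝ → ℝ, IsCopula2 C → asym C = 1/3 → ∀ ε > (0:ℝ),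
      ∃ C' : ℝ → ℝ → ℝ, IsCopula2 C' ∧ dsup C C' < ε ∧ asym C' ≠ 1/3) ∧
    (∀ C : ℝ → ℝ → ℝ, IsCopula2 C → asym C = 1/3 → ∀ n : ℕ, 1 ≤ n →
      asym (fun u v => (1 - 1/(n:ℝ)) * C u v + (1/(n:ℝ)) * (u * v)) ≠ 1/3) := by
  have mix_ne : ∀ C, IsCopula2 C → asym C = 1/3 → ∀ t : ℝ, 0 < t → t ≤ 1 →
      asym (fun u v => (1 - t) * C u v + t * (u * v)) ≠ 1/3 := fun C hC hA t ht₀ ht₁ =>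
    ((hC.asym_convexComb_mul_lt (by rw [hA]; norm_num) ht₀ ht₁).trans_eq hA).ne
  refine ⟨fun C hC hA ε hε => ?_, fun C hC hA n hn => ?_⟩
  · obtain ⟨n, hn⟩ := exists_nat_one_div_lt hε
    have ht₀ : (0:ℝ) < 1 / (n + 1) := by positivity
    have ht₁ : 1 / ((n:ℝ) + 1) ≤ 1 :=
      div_le_one_of_le₀ (le_add_of_nonneg_left n.cast_nonneg) (by positivity)
    exact ⟨_, hC.convexComb isCopula2_mul ht₀.le ht₁,
      (hC.dsup_convexComb_le isCopula2_mul ht₀.le).trans_lt hn, mix_ne C hC hA _ ht₀ ht₁⟩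
  · have hn' : (1:ℝ) ≤ n := by exact_mod_cast hn
    exact mix_ne C hC hA _ (by positivity) (div_le_one_of_le₀ hn' (by positivity))
end

section
/- For θ ∈ [2/3, 3/4], the function C_θ defined by C_θ(u,v) = min(u, v−θ) if (u,v) ∈ [0,1−θ]×[θ,1], C_θ(u,v) = min(u+θ−1, v) if (u,v) ∈ [1−θ,1]×[0,θ], and C_θ(u,v) = max(u+v−1, 0) otherwise, is a 2-copula. -/
/-!
`C_θ` is the joint distribution function of `(U, U + θ mod 1)` for `U` uniform on `[0,1]`: the
mass `1 - θ` lies uniformly on the diagonal segment from `(0, θ)` to `(1 - θ, 1)` and the mass `θ`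
on the one from `(1 - θ, 0)` to `(1, θ)`. On the unit square it is therefore the sum of the
distribution functions of these two segments, each a clamped `min (u - a) (v - b)`; such a
function is 2-increasing because `min` is, and the margins are read off piece by piece.
-/

open Set

/-- The copula C_θ: a shuffle of Min with mass on two segments. -/
noncomputable def Ctheta (θ u v : ℝ) : ℝ :=
  if u ∈ Set.Icc (0:ℝ) (1 - θ) ∧ v ∈ Set.Icc θ 1 then min u (v - θ)
  else if u ∈ Set.Icc (1 - θ) 1 ∧ v ∈ Set.Icc (0:ℝ) θ then min (u + θ - 1) v
  else max (u + v - 1) 0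

theorem Monotone.map_min_add_map_min_le {α β : Type*} [LinearOrder α] [AddCommMonoid β]
    [PartialOrder β] [IsOrderedAddMonoid β] {g : α → β} (hg : Monotone g) {u u' v v' : α}
    (hu : u ≤ u') (hv : v ≤ v') :
    g (min u' v) + g (min u v') ≤ g (min u' v') + g (min u v) := by
  rcases le_total u v with h | h
  · rw [min_eq_left h, min_eq_left (h.trans hv)]
    exact add_le_add_left (hg (min_le_min_left u' hv)) _
  · rw [min_eq_right h, min_eq_right (h.trans hu), add_comm]
    exact add_le_add_left (hg (min_le_min_right v' hu)) _

/-- The measure of `[0,u] × [0,v]` under mass `L` spread uniformly on the diagonal segment from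
`(a, b)` to `(a + L, b + L)`. -/
def segmentMass (a b L u v : ℝ) : ℝ :=
  max 0 (min (min (u - a) (v - b)) L)

section segmentMass

variable {a b L u v : ℝ}

theorem segmentMass_eq_zero_of_fst_le (h : u ≤ a) : segmentMass a b L u v = 0 :=
  max_eq_left <| (min_le_left _ _).trans <| (min_le_left _ _).trans (sub_nonpos.2 h)

theorem segmentMass_eq_zero_of_snd_le (h : v ≤ b) : segmentMass a b L u v = 0 :=
  max_eq_left <| (min_le_left _ _).trans <| (min_le_right _ _).trans (sub_nonpos.2 h)

theorem segmentMass_eq_min (h : min (u - a) (v - b) ∈ Icc 0 L) :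
    segmentMass a b L u v = min (u - a) (v - b) := by
  rw [segmentMass, min_eq_left h.2, max_eq_right h.1]

theorem segmentMass_eq_fst (hu : a ≤ u) (hu' : u ≤ a + L) (hv : b + L ≤ v) :
    segmentMass a b L u v = u - a := by
  rw [segmentMass, min_eq_left (show u - a ≤ v - b by linarith),
    min_eq_left (show u - a ≤ L by linarith), max_eq_right (sub_nonneg.2 hu)]

theorem segmentMass_eq_snd (hu : a + L ≤ u) (hv : b ≤ v) (hv' : v ≤ b + L) :
    segmentMass a b L u v = v - b := by
  rw [segmentMass, min_eq_right (show v - b ≤ u - a by linarith),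
    min_eq_left (show v - b ≤ L by linarith), max_eq_right (sub_nonneg.2 hv)]

theorem segmentMass_volume_nonneg {u' v' : ℝ} (hu : u ≤ u') (hv : v ≤ v') :
    0 ≤ segmentMass a b L u' v' - segmentMass a b L u' v - segmentMass a b L u v'
      + segmentMass a b L u v := by
  have hclamp : Monotone fun t : ℝ => max 0 (min t L) := fun _ _ h =>
    max_le_max le_rfl (min_le_min_right L h)
  have := hclamp.map_min_add_map_min_le (sub_le_sub_right hu a) (sub_le_sub_right hv b)
  simp only [segmentMass]
  linarith

end segmentMass

/-- The range condition in `IsCopula2` follows from the margins and 2-increasingness. -/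
theorem IsCopula2.of_margins {C : ℝ → ℝ → ℝ}
    (hmargin : ∀ u ∈ Icc (0:ℝ) 1, C u 0 = 0 ∧ C 0 u = 0 ∧ C u 1 = u ∧ C 1 u = u)
    (hvol : ∀ u ∈ Icc (0:ℝ) 1, ∀ u' ∈ Icc (0:ℝ) 1, ∀ v ∈ Icc (0:ℝ) 1, ∀ v' ∈ Icc (0:ℝ) 1,
      u ≤ u' → v ≤ v' → 0 ≤ C u' v' - C u' v - C u v' + C u v) :
    IsCopula2 C := by
  have h0 : (0:ℝ) ∈ Icc (0:ℝ) 1 := ⟨le_rfl, zero_le_one⟩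
  have h1 : (1:ℝ) ∈ Icc (0:ℝ) 1 := ⟨zero_le_one, le_rfl⟩
  refine ⟨fun u hu v hv => ⟨?_, ?_⟩, hmargin, hvol⟩
  · have := hvol 0 h0 u hu 0 h0 v hv hu.1 hv.1
    linarith [hmargin u hu, hmargin v hv, hmargin 0 h0]
  · have := hvol 0 h0 u hu v hv 1 h1 hu.1 hv.2
    linarith [hmargin u hu, hmargin v hv, hmargin 1 h1, hu.2]

theorem IsCopula2.congr {C D : ℝ → ℝ → ℝ} (hC : IsCopula2 C)
    (h : ∀ u ∈ Icc (0:ℝ) 1, ∀ v ∈ Icc (0:ℝ) 1, C u v = D u v) : IsCopula2 D := by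
  have h0 : (0:ℝ) ∈ Icc (0:ℝ) 1 := ⟨le_rfl, zero_le_one⟩
  have h1 : (1:ℝ) ∈ Icc (0:ℝ) 1 := ⟨zero_le_one, le_rfl⟩
  obtain ⟨-, hmargin, hvol⟩ := hC
  refine IsCopula2.of_margins (fun u hu => ?_) (fun u hu u' hu' v hv v' hv' huu hvv => ?_)
  · rw [← h u hu 0 h0, ← h 0 h0 u hu, ← h u hu 1 h1, ← h 1 h1 u hu]
    exact hmargin u hu
  · rw [← h u' hu' v' hv', ← h u' hu' v hv, ← h u hu v' hv', ← h u hu v hv]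
    exact hvol u hu u' hu' v hv v' hv' huu hvv

def rotationCopula (θ u v : ℝ) : ℝ :=
  segmentMass 0 θ (1 - θ) u v + segmentMass (1 - θ) 0 θ u v

section rotationCopula

variable {θ : ℝ}

theorem isCopula2_rotationCopula (h0 : 0 ≤ θ) (h1 : θ ≤ 1) : IsCopula2 (rotationCopula θ) := by
  refine IsCopula2.of_margins (fun u ⟨hu0, hu1⟩ => ⟨?_, ?_, ?_, ?_⟩)
    (fun u _ u' _ v _ v' _ hu hv => ?_)
  · rw [rotationCopula, segmentMass_eq_zero_of_snd_le h0, segmentMass_eq_zero_of_snd_le le_rfl]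
    norm_num
  · rw [rotationCopula, segmentMass_eq_zero_of_fst_le le_rfl,
      segmentMass_eq_zero_of_fst_le (by linarith)]
    norm_num
  · rcases le_total u (1 - θ) with hu | hu
    · rw [rotationCopula, segmentMass_eq_fst hu0 (by linarith) (by linarith),
        segmentMass_eq_zero_of_fst_le hu]
      ring
    · rw [rotationCopula, segmentMass_eq_snd (by linarith) h1 (by linarith),
        segmentMass_eq_fst hu (by linarith) (by linarith)]
      ring
  · rcases le_total u θ with hu | hu
    · rw [rotationCopula, segmentMass_eq_zero_of_snd_le hu,
        segmentMass_eq_snd (by linarith) hu0 (by linarith)]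
      ring
    · rw [rotationCopula, segmentMass_eq_snd (by linarith) hu (by linarith),
        segmentMass_eq_fst (by linarith) (by linarith) (by linarith)]
      ring
  · have := segmentMass_volume_nonneg (a := 0) (b := θ) (L := 1 - θ) hu hv
    have := segmentMass_volume_nonneg (a := 1 - θ) (b := 0) (L := θ) hu hv
    simp only [rotationCopula]
    linarith

theorem Ctheta_eq_rotationCopula {u v : ℝ} (hu : u ∈ Icc (0:ℝ) 1)
    (hv : v ∈ Icc (0:ℝ) 1) : Ctheta θ u v = rotationCopula θ u v := by
  obtain ⟨hu0, hu1⟩ := hu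
  obtain ⟨hv0, hv1⟩ := hv
  unfold Ctheta rotationCopula
  split_ifs with hA hB
  · rw [segmentMass_eq_min ⟨le_min (by linarith) (by linarith [hA.2.1]),
      min_le_of_left_le (by linarith [hA.1.2])⟩, segmentMass_eq_zero_of_fst_le hA.1.2]
    simp
  · rw [segmentMass_eq_zero_of_snd_le hB.2.2, segmentMass_eq_min ⟨le_min (by linarith [hB.1.1])
      (by linarith), min_le_of_right_le (by linarith [hB.2.2])⟩]
    ring_nf
  · rcases le_total v θ with hv | hv <;> rcases le_total u (1 - θ) with hu | hu
    · rw [segmentMass_eq_zero_of_snd_le hv, segmentMass_eq_zero_of_fst_le hu,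
        max_eq_right (by linarith)]
      norm_num
    · exact absurd ⟨⟨hu, hu1⟩, hv0, hv⟩ hB
    · exact absurd ⟨⟨hu0, hu⟩, hv, hv1⟩ hA
    · rw [segmentMass_eq_snd (by linarith) hv (by linarith),
        segmentMass_eq_fst hu (by linarith) (by linarith), max_eq_left (by linarith)]
      ring

end rotationCopula

/-- For θ ∈ [2/3, 3/4], C_θ is a 2-copula. -/
theorem Ctheta_isCopula2 (θ : ℝ) (hθ : θ ∈ Icc (2/3 : ℝ) (3/4)) :
    IsCopula2 (Ctheta θ) := by
  have h0 : 0 ≤ θ := by linarith [hθ.1]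
  have h1 : θ ≤ 1 := by linarith [hθ.2]
  exact (isCopula2_rotationCopula h0 h1).congr fun u hu v hv =>
    (Ctheta_eq_rotationCopula hu hv).symm
end

section
/- For c ∈ [0,1], the function C_{(c)}(u,v) = min(u, v, max((u+v−c)/(2−c), 0)) is a 2-copula. -/
open Set

/-- The one-parameter family C_{(c)}(u,v) = min(u, v, max((u+v−c)/(2−c), 0)). -/
noncomputable def Cc (c u v : ℝ) : ℝ := min u (min v (max ((u + v - c)/(2 - c)) 0))

/-!
Write `C_{(c)}(u,v) = min(u, min(v, h(u+v)))` with `h(t) = max((t-c)/(2-c), 0)`, a convex,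
nondecreasing function of slope at most `1`. A convex function of `u + v` is 2-increasing, and
the minimum of two 2-increasing functions `F`, `G` is again 2-increasing as long as `F - G` is
nondecreasing in `u` and nonincreasing in `v`. This applies first to `u` and `h(u+v)`, then to
`min(u, h(u+v))` and `v`. The boundary conditions follow from `h(0) ≥ 0` and `h(2) ≥ 1`: since
`t - h(t)` is nondecreasing, `h(u+1) ≥ u` for `u ≤ 1`.
-/

def TwoIncreasing (F : ℝ → ℝ → ℝ) : Prop :=
  ∀ ⦃u u' v v' : ℝ⦄, u ≤ u' → v ≤ v' → F u v' + F u' v ≤ F u v + F u' v'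

lemma ConvexOn.map_add_map_le_of_add_eq {h : ℝ → ℝ} (hh : ConvexOn ℝ univ h) {s x y t : ℝ}
    (hsx : s ≤ x) (hxt : x ≤ t) (hsum : x + y = s + t) : h x + h y ≤ h s + h t := by
  obtain rfl | hst := (hsx.trans hxt).eq_or_lt
  · obtain rfl : x = s := le_antisymm hxt hsx
    obtain rfl : y = x := by linarith
    rfl
  have hd : t - s ≠ 0 := (sub_pos.2 hst).ne'
  set a := (x - s) / (t - s)
  set b := (t - x) / (t - s)
  have ha : 0 ≤ a := div_nonneg (sub_nonneg.2 hsx) (sub_pos.2 hst).le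
  have hb : 0 ≤ b := div_nonneg (sub_nonneg.2 hxt) (sub_pos.2 hst).le
  have hab : b + a = 1 := by rw [← add_div, div_eq_one_iff_eq hd]; ring
  have hx : b • s + a • t = x := by simp only [smul_eq_mul, a, b]; field_simp; ring
  have hy : a • s + b • t = y := by
    rw [show y = s + t - x by linarith]; simp only [smul_eq_mul, a, b]; field_simp; ring
  have h₁ := hh.2 (mem_univ s) (mem_univ t) hb ha hab
  have h₂ := hh.2 (mem_univ s) (mem_univ t) ha hb (by rw [add_comm, hab])
  rw [hx, smul_eq_mul, smul_eq_mul] at h₁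
  rw [hy, smul_eq_mul, smul_eq_mul] at h₂
  linear_combination h₁ + h₂ + (h s + h t) * hab

lemma ConvexOn.twoIncreasing_comp_add {h : ℝ → ℝ} (hh : ConvexOn ℝ univ h) :
    TwoIncreasing fun u v => h (u + v) := fun u u' v v' hu hv =>
  hh.map_add_map_le_of_add_eq (by linarith) (by linarith) (by ring)

lemma TwoIncreasing.min {F G : ℝ → ℝ → ℝ} (hF : TwoIncreasing F) (hG : TwoIncreasing G)
    (hmono : ∀ v, Monotone fun u => F u v - G u v) (hanti : ∀ u, Antitone fun v => F u v - G u v) :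
    TwoIncreasing fun u v => min (F u v) (G u v) := by
  intro u u' v v' hu hv
  have := hF hu hv
  have := hG hu hv
  have := hmono v hu
  have := hmono v' hu
  have := hanti u hv
  have := hanti u' hv
  dsimp only at *
  rcases min_cases (F u' v) (G u' v) with ⟨e1, _⟩ | ⟨e1, _⟩ <;>
  rcases min_cases (F u v') (G u v') with ⟨e2, _⟩ | ⟨e2, _⟩ <;>
  rcases min_cases (F u' v') (G u' v') with ⟨e3, _⟩ | ⟨e3, _⟩ <;>
  rcases min_cases (F u v) (G u v) with ⟨e4, _⟩ | ⟨e4, _⟩ <;>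
  rw [e1, e2, e3, e4] <;> linarith

section
variable {h : ℝ → ℝ}

lemma twoIncreasing_min_min_comp_add (hconv : ConvexOn ℝ univ h) (hmono : Monotone h)
    (hslope : Monotone fun t => t - h t) :
    TwoIncreasing fun u v => min u (min v (h (u + v))) := by
  have hinner : TwoIncreasing fun u v => min u (h (u + v)) :=
    TwoIncreasing.min (fun _ _ _ _ _ _ => le_rfl) hconv.twoIncreasing_comp_add
      (fun v u u' hu => by
        have := hslope (show u + v ≤ u' + v by linarith)
        dsimp only at this ⊢
        linarith)
      (fun u v v' hv => by
        have := hmono (show u + v ≤ u + v' by linarith)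
        dsimp only
        linarith)
  have houter : TwoIncreasing fun u v => min (min u (h (u + v))) v :=
    hinner.min (fun _ _ _ _ _ _ => (add_comm _ _).le)
      (fun v u u' hu => by
        simpa using min_le_min hu (hmono (show u + v ≤ u' + v by linarith)))
      (fun u => by
        simp only [← min_sub_sub_right]
        refine Antitone.min (fun v v' hv => by linarith) (fun v v' hv => ?_)
        have := hslope (show u + v ≤ u + v' by linarith)
        dsimp only at this ⊢
        linarith)
  simpa only [min_right_comm _ _ (_ : ℝ), min_assoc] using houter

lemma isCopula2_min_min_comp_add (hconv : ConvexOn ℝ univ h) (hmono : Monotone h)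
    (hslope : Monotone fun t => t - h t) (h0 : 0 ≤ h 0) (h2 : 1 ≤ h 2) :
    IsCopula2 fun u v => min u (min v (h (u + v))) := by
  have hnonneg : ∀ t, 0 ≤ t → 0 ≤ h t := fun t ht => h0.trans (hmono ht)
  have hmargin : ∀ u ≤ 1, u ≤ h (u + 1) := fun u hu => by
    have := hslope (show u + 1 ≤ 2 by linarith)
    dsimp only at this
    linarith
  refine ⟨fun u hu v hv => ⟨?_, ?_⟩, fun u hu => ⟨?_, ?_, ?_, ?_⟩, ?_⟩
  · exact le_min hu.1 (le_min hv.1 (hnonneg _ (add_nonneg hu.1 hv.1)))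
  · exact (min_le_left _ _).trans hu.2
  · dsimp only
    rw [min_eq_left (hnonneg _ (by linarith [hu.1])), min_eq_right hu.1]
  · exact min_eq_left (le_min hu.1 (hnonneg _ (by linarith [hu.1])))
  · exact min_eq_left (le_min hu.2 (hmargin u hu.2))
  · dsimp only
    rw [add_comm, min_eq_left (hmargin u hu.2), min_eq_right hu.2]
  · intro u _ u' _ v _ v' _ hu hv
    have := twoIncreasing_min_min_comp_add hconv hmono hslope hu hv
    dsimp only at this ⊢
    linarith

end

section
variable (c k : ℝ)

lemma convexOn_max_sub_div_zero : ConvexOn ℝ univ fun t => max ((t - c) / k) 0 := by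
  refine ConvexOn.sup ⟨convex_univ, fun x _ y _ a b _ _ hab => le_of_eq ?_⟩
    (convexOn_const 0 convex_univ)
  simp only [smul_eq_mul]
  linear_combination (c / k) * hab

variable {c k}

lemma monotone_max_sub_div_zero (hk : 0 ≤ k) : Monotone fun t => max ((t - c) / k) 0 :=
  Monotone.max (fun _ _ hxy => div_le_div_of_nonneg_right (by linarith) hk) monotone_const

lemma monotone_sub_max_sub_div_zero (hk : 1 ≤ k) :
    Monotone fun t => t - max ((t - c) / k) 0 := by
  intro x y hxy
  have hdiv : (y - c) / k - (x - c) / k ≤ y - x := by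
    rw [← sub_div, sub_sub_sub_cancel_right]
    exact div_le_self (by linarith) hk
  dsimp only
  rcases max_cases ((x - c) / k) 0 with ⟨ex, _⟩ | ⟨ex, _⟩ <;>
  rcases max_cases ((y - c) / k) 0 with ⟨ey, _⟩ | ⟨ey, _⟩ <;>
  rw [ex, ey] <;> linarith

end

/-- For c ∈ [0,1], the function C_{(c)} is a 2-copula. -/
theorem Cc_isCopula2 (c : ℝ) (hc : c ∈ Icc (0:ℝ) 1) : IsCopula2 (Cc c) := by
  have hk : 1 ≤ 2 - c := by linarith [hc.2]
  refine isCopula2_min_min_comp_add (convexOn_max_sub_div_zero c (2 - c))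
    (monotone_max_sub_div_zero (by linarith)) (monotone_sub_max_sub_div_zero hk)
    (le_max_right _ _) ?_
  rw [div_self (by linarith)]
  exact le_max_left _ _
end
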